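/- Let m ≥ 2 be an integer. Let y_1, y_2, … ∈ {0,1} be any outcome sequence and p_1, p_2, … ∈ {M_1,…,M_m} any forecast sequence. Fix t ≥ 1 and suppose there exists j ∈ {1,…,m−1} with e_j^t > 0 and d_{j+1}^t > 0 such that p_{t+1} = M_j if y_{t+1} = 0 and p_{t+1} = M_{j+1} if y_{t+1} = 1. Let i denote the index of the realized forecast (i = j if y_{t+1} = 0, i = j+1 if y_{t+1} = 1). Then N_i^{t+1} · max(d_i^{t+1}, e_i^{t+1}) ≤ max( N_i^t · max(d_i^t, e_i^t) , 1 ). -/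

import Mathlib

namespace Calib

/-- Gridpoint M_i = (2i-1)/(2m). -/
noncomputable def Mg (m i : ℕ) : ℝ := (2 * (i : ℝ) - 1) / (2 * m)

/-- Left endpoint l_i = (i-1)/m. -/
noncomputable def lept (m i : ℕ) : ℝ := ((i : ℝ) - 1) / m

/-- Right endpoint r_i = i/m. -/
noncomputable def rept (m i : ℕ) : ℝ := (i : ℝ) / m

/-- N_i^t = #{1 ≤ s ≤ t : p_s = M_i}. -/
def Ncount (a : ℕ → ℕ) (i t : ℕ) : ℕ :=
  ((Finset.Icc 1 t).filter (fun s => a s = i)).card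

/-- Empirical average p_i^t of the outcomes on rounds where M_i was forecast. -/
noncomputable def emp (m : ℕ) (a : ℕ → ℕ) (y : ℕ → ℝ) (i t : ℕ) : ℝ :=
  if 0 < Ncount a i t then
    (∑ s ∈ Finset.Icc 1 t, if a s = i then y s else 0) / (Ncount a i t)
  else Mg m i

/-- Deficit d_i^t = l_i - p_i^t. -/
noncomputable def defc (m : ℕ) (a : ℕ → ℕ) (y : ℕ → ℝ) (i t : ℕ) : ℝ :=
  lept m i - emp m a y i t

/-- Excess e_i^t = p_i^t - r_i. -/
noncomputable def exc (m : ℕ) (a : ℕ → ℕ) (y : ℕ → ℝ) (i t : ℕ) : ℝ :=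
  emp m a y i t - rept m i

/-- Condition A at time t: some i ∈ {1,…,m} has d_i^t ≤ 0 and e_i^t ≤ 0. -/
def condA (m : ℕ) (a : ℕ → ℕ) (y : ℕ → ℝ) (t : ℕ) : Prop :=
  ∃ i, 1 ≤ i ∧ i ≤ m ∧ defc m a y i t ≤ 0 ∧ exc m a y i t ≤ 0

/-- The POTC-Cal algorithm (binary outcomes), allowing any admissible choice of
index at each step: p_1 = M_1; at time t+1, if condition A holds play a
witnessing M_i; otherwise pick i with e_i^t > 0 and d_{i+1}^t > 0 and play
M_i if y_{t+1} = 0 and M_{i+1} if y_{t+1} = 1. -/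
def POTC (m : ℕ) (a : ℕ → ℕ) (y : ℕ → ℝ) : Prop :=
  a 1 = 1 ∧
  ∀ t, 1 ≤ t →
    (∃ i, 1 ≤ i ∧ i ≤ m ∧ defc m a y i t ≤ 0 ∧ exc m a y i t ≤ 0 ∧ a (t + 1) = i) ∨
    (¬ condA m a y t ∧
      ∃ i, 1 ≤ i ∧ i ≤ m - 1 ∧ 0 < exc m a y i t ∧ 0 < defc m a y (i + 1) t ∧
        (y (t + 1) = 0 → a (t + 1) = i) ∧ (y (t + 1) = 1 → a (t + 1) = i + 1))

end Calib

/-!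
When `M_i` is played at time `t + 1` with outcome `y`, the scaled deviations move additively:
`N_i d_i` gains `l_i - y` and `N_i e_i` gains `y - r_i`. Under condition B with `y = 0` the
index `j` has `e_j > 0`, hence `d_j < 0` since `d_j + e_j = l_j - r_j < 0`; so `N_j e_j` does not
grow (`r_j ≥ 0`) and `N_j d_j` ends at most `l_j ≤ 1`. The case `y = 1` is the mirror image.
-/

theorem max_mul_add_le_max_mul_max {N d e δ ε : ℝ} (hN : 0 ≤ N) (hd : d ≤ 0)
    (hδ : δ ≤ 1) (hε : ε ≤ 0) : max (N * d + δ) (N * e + ε) ≤ max (N * max d e) 1 := by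
  refine max_le ?_ ?_
  · have : N * d ≤ 0 := mul_nonpos_of_nonneg_of_nonpos hN hd
    exact le_max_of_le_right (by linarith)
  · have : N * e ≤ N * max d e := mul_le_mul_of_nonneg_left (le_max_right d e) hN
    exact le_max_of_le_left (by linarith)

namespace Calib

theorem rept_nonneg (m i : ℕ) : 0 ≤ rept m i := by
  unfold rept; positivity

theorem lept_le_one {m i : ℕ} (h : i ≤ m + 1) : lept m i ≤ 1 := by
  have hi : (i : ℝ) ≤ m + 1 := by exact_mod_cast h
  exact div_le_one_of_le₀ (by linarith) (Nat.cast_nonneg m)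

theorem defc_add_exc_nonpos (m : ℕ) (a : ℕ → ℕ) (y : ℕ → ℝ) (i t : ℕ) :
    defc m a y i t + exc m a y i t ≤ 0 := by
  have : lept m i ≤ rept m i := by
    unfold lept rept
    exact div_le_div_of_nonneg_right (by linarith) (Nat.cast_nonneg m)
  unfold defc exc
  linarith

section Step

variable {m : ℕ} {a : ℕ → ℕ} {y : ℕ → ℝ} {i t : ℕ}

theorem Ncount_succ_of_eq (h : a (t + 1) = i) : Ncount a i (t + 1) = Ncount a i t + 1 := by
  simp only [Ncount, Finset.card_filter, Finset.sum_Icc_succ_top (Nat.le_add_left 1 t),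
    if_pos h]

theorem Ncount_mul_emp :
    (Ncount a i t : ℝ) * emp m a y i t = ∑ s ∈ Finset.Icc 1 t, if a s = i then y s else 0 := by
  rcases Nat.eq_zero_or_pos (Ncount a i t) with hN | hN
  · have hempty : (Finset.Icc 1 t).filter (fun s => a s = i) = ∅ := Finset.card_eq_zero.1 hN
    rw [hN, ← Finset.sum_filter, hempty, Nat.cast_zero, zero_mul, Finset.sum_empty]
  · rw [emp, if_pos hN]
    field_simp

theorem Ncount_mul_emp_succ (h : a (t + 1) = i) :
    (Ncount a i (t + 1) : ℝ) * emp m a y i (t + 1) =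
      Ncount a i t * emp m a y i t + y (t + 1) := by
  rw [Ncount_mul_emp, Ncount_mul_emp, Finset.sum_Icc_succ_top (Nat.le_add_left 1 t), if_pos h]

theorem Ncount_mul_max_succ (h : a (t + 1) = i) :
    (Ncount a i (t + 1) : ℝ) * max (defc m a y i (t + 1)) (exc m a y i (t + 1)) =
      max (Ncount a i t * defc m a y i t + (lept m i - y (t + 1)))
        (Ncount a i t * exc m a y i t + (y (t + 1) - rept m i)) := by
  have hemp := Ncount_mul_emp_succ (m := m) (y := y) h
  rw [Ncount_succ_of_eq h, Nat.cast_succ] at hemp ⊢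
  rw [mul_max_of_nonneg _ _ (by positivity)]
  unfold defc exc
  congr 1
  · linear_combination -hemp
  · linear_combination hemp

end Step

end Calib

theorem potc_cal_condB_step_general (m : ℕ) (y : ℕ → ℝ) (a : ℕ → ℕ)
    (t : ℕ) (j : ℕ) (hjm : j ≤ m - 1)
    (he : 0 < Calib.exc m a y j t) (hd : 0 < Calib.defc m a y (j + 1) t)
    (hplay0 : y (t + 1) = 0 → a (t + 1) = j)
    (hplay1 : y (t + 1) = 1 → a (t + 1) = j + 1)
    (i : ℕ) (hi : (y (t + 1) = 0 ∧ i = j) ∨ (y (t + 1) = 1 ∧ i = j + 1)) :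
    (Calib.Ncount a i (t + 1) : ℝ) *
        max (Calib.defc m a y i (t + 1)) (Calib.exc m a y i (t + 1))
      ≤ max ((Calib.Ncount a i t : ℝ) *
          max (Calib.defc m a y i t) (Calib.exc m a y i t)) 1 := by
  open Calib in
  rcases hi with ⟨hy0, hij⟩ | ⟨hy1, hij⟩
  · subst hij
    have hdj : defc m a y i t ≤ 0 := by linarith [defc_add_exc_nonpos m a y i t]
    have hlj : lept m i ≤ 1 := lept_le_one (by omega)
    rw [Ncount_mul_max_succ (hplay0 hy0), hy0]
    exact max_mul_add_le_max_mul_max (Nat.cast_nonneg _) hdj (by linarith)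
      (by linarith [rept_nonneg m i])
  · subst hij
    have hej : exc m a y (j + 1) t ≤ 0 := by linarith [defc_add_exc_nonpos m a y (j + 1) t]
    have hlj : lept m (j + 1) ≤ 1 := lept_le_one (by omega)
    rw [Ncount_mul_max_succ (hplay1 hy1), hy1, max_comm, max_comm (defc m a y (j + 1) t)]
    exact max_mul_add_le_max_mul_max (Nat.cast_nonneg _) hej
      (by linarith [rept_nonneg m (j + 1)]) (by linarith)

/-- Lemma 3.3, condition B: if e_j^t > 0, d_{j+1}^t > 0 and the
forecast at time t+1 is M_j when y_{t+1}=0 and M_{j+1} when y_{t+1}=1, then for the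
realized index i (= j if y_{t+1}=0, = j+1 if y_{t+1}=1),
N_i^{t+1} · max(d_i^{t+1}, e_i^{t+1}) ≤ max(N_i^t · max(d_i^t, e_i^t), 1). -/
theorem potc_cal_condB_step (m : ℕ) (hm : 2 ≤ m)
    (y : ℕ → ℝ) (hy : ∀ t, y t = 0 ∨ y t = 1)
    (a : ℕ → ℕ) (ha : ∀ t, 1 ≤ t → 1 ≤ a t ∧ a t ≤ m)
    (t : ℕ) (ht : 1 ≤ t) (j : ℕ) (hj1 : 1 ≤ j) (hjm : j ≤ m - 1)
    (he : 0 < Calib.exc m a y j t) (hd : 0 < Calib.defc m a y (j + 1) t)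
    (hplay0 : y (t + 1) = 0 → a (t + 1) = j)
    (hplay1 : y (t + 1) = 1 → a (t + 1) = j + 1)
    (i : ℕ) (hi : (y (t + 1) = 0 ∧ i = j) ∨ (y (t + 1) = 1 ∧ i = j + 1)) :
    (Calib.Ncount a i (t + 1) : ℝ) *
        max (Calib.defc m a y i (t + 1)) (Calib.exc m a y i (t + 1))
      ≤ max ((Calib.Ncount a i t : ℝ) *
          max (Calib.defc m a y i t) (Calib.exc m a y i t)) 1 :=
  potc_cal_condB_step_general m y a t j hjm he hd hplay0 hplay1 i hi
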